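/- Monotonicity of the Riccati step: if 0 ⪯ P̃ ⪯ P (i.e., P - P̃ ⪰ 0) and the stage cost matrix Q = [[Qx,Qxw],[Qxwᵀ,Qw]] is PSD, then the Riccati step outputs satisfy R(P̃) ⪯ R(P), where R(P) := (Qx + AᵀPA) - (Qxw + AᵀPB)(Qw + BᵀPB)†(Qxw + AᵀPB)ᵀ, provided P - P̃ = VC†Vᵀ for some C ⪰ 0 with range(Vᵀ) ⊆ range(C). -/

import Mathlib

/-! Write `M(P) = Q + [A B]ᵀ P [A B] = [[X, g], [gᵀ, G]]`, so that `R(P) = X - g G⁺ gᵀ` is a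
generalized Schur complement of `M(P)`. For PSD `M` the quadratic form of `M` vanishes on
`[0; 1 - G⁺G]`, which forces the range condition `g G⁺ G = g`; with it the square completes:
`[1; Y]ᵀ M [1; Y] = (X - g G⁺ gᵀ) + (Y + G⁺gᵀ)ᵀ G (Y + G⁺gᵀ)` for every `Y`. Evaluating this at
`K = [1; -G⁺gᵀ]` for both `M(P)` and `M(P̃)` gives
`R(P) - R(P̃) = Kᵀ (M(P) - M(P̃)) K + Eᵀ G̃ E` with `E = G̃⁺g̃ᵀ - G⁺gᵀ`. Both terms are PSD, since
`M(P) - M(P̃) = [A B]ᵀ V C⁺ Vᵀ [A B]` and the pseudoinverse of a PSD matrix is PSD. -/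

open Matrix

/-- The four Moore–Penrose conditions: `Dp` is the Moore–Penrose pseudoinverse of `D`. -/
def IsMP {α : Type*} [Fintype α] [DecidableEq α] (D Dp : Matrix α α ℝ) : Prop :=
  D * Dp * D = D ∧ Dp * D * Dp = Dp ∧ (D * Dp)ᵀ = D * Dp ∧ (Dp * D)ᵀ = Dp * D

open scoped MatrixOrder ComplexOrder in
theorem Matrix.PosSemidef.mul_eq_zero_of_conjTranspose_mul_mul_eq_zero {𝕜 ι κ : Type*}
    [RCLike 𝕜] [Fintype ι] [Fintype κ] {M : Matrix ι ι 𝕜} (hM : M.PosSemidef)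
    {L : Matrix ι κ 𝕜} (h : Lᴴ * M * L = 0) : M * L = 0 := by
  classical
  obtain ⟨B, rfl⟩ := CStarAlgebra.nonneg_iff_eq_star_mul_self.mp hM.nonneg
  have hBL : (B * L)ᴴ * (B * L) = 0 := by
    simpa [star_eq_conjTranspose, Matrix.mul_assoc] using h
  rw [star_eq_conjTranspose, Matrix.mul_assoc, conjTranspose_mul_self_eq_zero.mp hBL,
    Matrix.mul_zero]

namespace IsMP

section Square

variable {α : Type*} [Fintype α] [DecidableEq α] {D Dp : Matrix α α ℝ}

theorem transpose (h : IsMP D Dp) : IsMP Dᵀ Dpᵀ := by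
  obtain ⟨h1, h2, h3, h4⟩ := h
  refine ⟨?_, ?_, ?_, ?_⟩
  · simpa [transpose_mul, Matrix.mul_assoc] using congrArg Matrix.transpose h1
  · simpa [transpose_mul, Matrix.mul_assoc] using congrArg Matrix.transpose h2
  · rw [← transpose_mul, h4, h4]
  · rw [← transpose_mul, h3, h3]

theorem unique {X Y : Matrix α α ℝ} (hX : IsMP D X) (hY : IsMP D Y) : X = Y := by
  obtain ⟨hX1, hX2, hX3, hX4⟩ := hX
  obtain ⟨hY1, hY2, hY3, hY4⟩ := hY
  have hXD : X * D = Y * D :=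
    calc X * D = (Y * D)ᵀ * (X * D)ᵀ := by
          rw [← transpose_mul, Matrix.mul_assoc, ← Matrix.mul_assoc D, hY1, hX4]
      _ = Y * D := by rw [hX4, hY4, Matrix.mul_assoc, ← Matrix.mul_assoc D, hX1]
  have hDX : D * X = D * Y :=
    calc D * X = (D * X)ᵀ * (D * Y)ᵀ := by
          rw [← transpose_mul, ← Matrix.mul_assoc, hY1, hX3]
      _ = D * Y := by rw [hX3, hY3, ← Matrix.mul_assoc, hX1]
  calc X = X * D * Y := by rw [Matrix.mul_assoc, ← hDX, ← Matrix.mul_assoc, hX2]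
    _ = Y := by rw [hXD, hY2]

theorem isSymm (h : IsMP D Dp) (hD : D.IsSymm) : Dp.IsSymm :=
  unique (hD.eq ▸ h.transpose) h

theorem posSemidef (h : IsMP D Dp) (hD : D.PosSemidef) : Dp.PosSemidef := by
  have hDp : Dp.IsSymm := h.isSymm (by simpa using hD.isHermitian)
  have := hD.mul_mul_conjTranspose_same Dp
  rwa [conjTranspose_eq_transpose_of_trivial, hDp.eq, h.2.1] at this

end Square

section Blocks

variable {ν μ : Type*} [Fintype ν] [Fintype μ] [DecidableEq μ]

theorem mul_mul_eq_of_posSemidef_fromBlocks {X : Matrix ν ν ℝ} {g : Matrix ν μ ℝ}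
    {h : Matrix μ ν ℝ} {G Gp : Matrix μ μ ℝ} (hGp : IsMP G Gp)
    (hM : (fromBlocks X g h G).PosSemidef) : g * Gp * G = g := by
  set N := 1 - Gp * G
  have hGN : G * N = 0 := by
    rw [Matrix.mul_sub, Matrix.mul_one, ← Matrix.mul_assoc, hGp.1, sub_self]
  have hML : fromBlocks X g h G * fromRows (0 : Matrix ν μ ℝ) N = fromRows (g * N) 0 := by
    simp [fromBlocks_mul_fromRows, hGN]
  have hML0 : fromBlocks X g h G * fromRows (0 : Matrix ν μ ℝ) N = 0 := by
    refine hM.mul_eq_zero_of_conjTranspose_mul_mul_eq_zero ?_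
    rw [Matrix.mul_assoc, hML]
    simp [transpose_fromRows, fromCols_mul_fromRows]
  have hgN : g * N = 0 := congrArg toRows₁ (hML.symm.trans hML0)
  rw [Matrix.mul_sub, Matrix.mul_one, sub_eq_zero] at hgN
  rw [Matrix.mul_assoc, ← hgN]

theorem fromRows_conj_fromBlocks_eq_schur_add [DecidableEq ν] {X : Matrix ν ν ℝ}
    {g : Matrix ν μ ℝ} {G Gp : Matrix μ μ ℝ} (hGp : IsMP G Gp)
    (hM : (fromBlocks X g gᵀ G).PosSemidef) (Y : Matrix μ ν ℝ) :
    (fromRows (1 : Matrix ν ν ℝ) Y)ᵀ * fromBlocks X g gᵀ G * fromRows (1 : Matrix ν ν ℝ) Y =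
      X - g * Gp * gᵀ + (Y + Gp * gᵀ)ᵀ * G * (Y + Gp * gᵀ) := by
  have hG : G.IsSymm := (isSymm_fromBlocks_iff.mp (by simpa using hM.isHermitian)).2.2.2
  have hGps : Gpᵀ = Gp := (hGp.isSymm hG).eq
  have hg : g * Gp * G = g := hGp.mul_mul_eq_of_posSemidef_fromBlocks hM
  have hgG : ∀ Z : Matrix μ ν ℝ, g * (Gp * (G * Z)) = g * Z := fun Z => by
    rw [← Matrix.mul_assoc, ← Matrix.mul_assoc, hg]
  have hGg : G * (Gp * gᵀ) = gᵀ := by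
    simpa [transpose_mul, hG.eq, hGps, Matrix.mul_assoc] using congrArg Matrix.transpose hg
  simp only [transpose_fromRows, transpose_one, fromCols_mul_fromBlocks, fromCols_mul_fromRows,
    transpose_add, transpose_mul, transpose_transpose, hGps, Matrix.add_mul, Matrix.mul_add,
    Matrix.one_mul, Matrix.mul_one, Matrix.mul_assoc, hgG, hGg]
  abel

end Blocks

end IsMP

theorem posSemidef_schur_sub_schur {ν μ : Type*} [Fintype ν] [Fintype μ] [DecidableEq ν]
    [DecidableEq μ] {X X' : Matrix ν ν ℝ} {g g' : Matrix ν μ ℝ} {G G' Gp G'p : Matrix μ μ ℝ}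
    (hGp : IsMP G Gp) (hG'p : IsMP G' G'p) (hM' : (fromBlocks X' g' g'ᵀ G').PosSemidef)
    (hle : (fromBlocks X g gᵀ G - fromBlocks X' g' g'ᵀ G').PosSemidef) :
    (X - g * Gp * gᵀ - (X' - g' * G'p * g'ᵀ)).PosSemidef := by
  have hM : (fromBlocks X g gᵀ G).PosSemidef := by simpa using hM'.add hle
  have hG' : G'.PosSemidef := hM'.submatrix Sum.inr
  set K := fromRows (1 : Matrix ν ν ℝ) (-(Gp * gᵀ))
  have hS : Kᵀ * fromBlocks X g gᵀ G * K = X - g * Gp * gᵀ := by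
    simpa using hGp.fromRows_conj_fromBlocks_eq_schur_add hM (-(Gp * gᵀ))
  have hS' := hG'p.fromRows_conj_fromBlocks_eq_schur_add hM' (-(Gp * gᵀ))
  set E := -(Gp * gᵀ) + G'p * g'ᵀ
  have hsplit : X - g * Gp * gᵀ - (X' - g' * G'p * g'ᵀ) =
      Kᵀ * (fromBlocks X g gᵀ G - fromBlocks X' g' g'ᵀ G') * K + Eᵀ * G' * E := by
    rw [Matrix.mul_sub, Matrix.sub_mul, hS, hS']
    abel
  rw [hsplit]
  refine PosSemidef.add ?_ ?_
  · simpa using hle.conjTranspose_mul_mul_same K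
  · simpa using hG'.conjTranspose_mul_mul_same E

theorem fromBlocks_add_transpose_fromCols_mul_mul {ν μ : Type*} [Fintype ν] [Fintype μ]
    (A : Matrix ν ν ℝ) (B : Matrix ν μ ℝ) (Qx : Matrix ν ν ℝ) (Qxw : Matrix ν μ ℝ)
    (Qw : Matrix μ μ ℝ) {S : Matrix ν ν ℝ} (hS : S.IsSymm) :
    fromBlocks Qx Qxw Qxwᵀ Qw + (fromCols A B)ᵀ * S * fromCols A B =
      fromBlocks (Qx + Aᵀ * S * A) (Qxw + Aᵀ * S * B) (Qxw + Aᵀ * S * B)ᵀ (Qw + Bᵀ * S * B) := by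
  rw [transpose_fromCols, fromRows_mul, fromRows_mul_fromCols, fromBlocks_add]
  simp [transpose_mul, hS.eq, Matrix.mul_assoc]

theorem riccati_step_monotone_general {n m k : ℕ}
    (A : Matrix (Fin n) (Fin n) ℝ) (B : Matrix (Fin n) (Fin m) ℝ)
    (P Pt : Matrix (Fin n) (Fin n) ℝ)
    (Qx : Matrix (Fin n) (Fin n) ℝ) (Qxw : Matrix (Fin n) (Fin m) ℝ)
    (Qw : Matrix (Fin m) (Fin m) ℝ)
    (V : Matrix (Fin n) (Fin k) ℝ) (C Cp : Matrix (Fin k) (Fin k) ℝ)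
    (Gp Gtp : Matrix (Fin m) (Fin m) ℝ)
    (hQ : (Matrix.fromBlocks Qx Qxw Qxwᵀ Qw).PosSemidef)
    (hPt : Pt.PosSemidef)
    (hC : C.PosSemidef)
    (hCp : IsMP C Cp)
    (hdiff : P - Pt = V * Cp * Vᵀ)
    (hGp : IsMP (Qw + Bᵀ * P * B) Gp)
    (hGtp : IsMP (Qw + Bᵀ * Pt * B) Gtp) :
    (((Qx + Aᵀ * P * A) - (Qxw + Aᵀ * P * B) * Gp * (Qxw + Aᵀ * P * B)ᵀ) -
      ((Qx + Aᵀ * Pt * A) -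
        (Qxw + Aᵀ * Pt * B) * Gtp * (Qxw + Aᵀ * Pt * B)ᵀ)).PosSemidef := by
  have hΔ : (P - Pt).PosSemidef := by
    simpa [hdiff] using (hCp.posSemidef hC).mul_mul_conjTranspose_same V
  have hP : P.IsSymm := by simpa using (hPt.add hΔ).isHermitian
  have hM := fromBlocks_add_transpose_fromCols_mul_mul A B Qx Qxw Qw hP
  have hMt := fromBlocks_add_transpose_fromCols_mul_mul A B Qx Qxw Qw
    (by simpa using hPt.isHermitian : Pt.IsSymm)
  refine posSemidef_schur_sub_schur hGp hGtp ?_ ?_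
  · rw [← hMt]
    exact hQ.add (by simpa using hPt.conjTranspose_mul_mul_same (fromCols A B))
  · rw [← hM, ← hMt, add_sub_add_left_eq_sub, ← Matrix.sub_mul, ← Matrix.mul_sub]
    simpa using hΔ.conjTranspose_mul_mul_same (fromCols A B)

theorem riccati_step_monotone {n m k : ℕ}
    (A : Matrix (Fin n) (Fin n) ℝ) (B : Matrix (Fin n) (Fin m) ℝ)
    (P Pt : Matrix (Fin n) (Fin n) ℝ)
    (Qx : Matrix (Fin n) (Fin n) ℝ) (Qxw : Matrix (Fin n) (Fin m) ℝ)
    (Qw : Matrix (Fin m) (Fin m) ℝ)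
    (V : Matrix (Fin n) (Fin k) ℝ) (C Cp : Matrix (Fin k) (Fin k) ℝ)
    (Gp Gtp : Matrix (Fin m) (Fin m) ℝ)
    (hQ : (Matrix.fromBlocks Qx Qxw Qxwᵀ Qw).PosSemidef)
    (hP : P.PosSemidef) (hPt : Pt.PosSemidef)
    (hC : C.PosSemidef)
    (hV : ∃ Y : Matrix (Fin k) (Fin n) ℝ, Vᵀ = C * Y)
    (hCp : IsMP C Cp)
    (hdiff : P - Pt = V * Cp * Vᵀ)
    (hGp : IsMP (Qw + Bᵀ * P * B) Gp)
    (hGtp : IsMP (Qw + Bᵀ * Pt * B) Gtp) :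
    (((Qx + Aᵀ * P * A) - (Qxw + Aᵀ * P * B) * Gp * (Qxw + Aᵀ * P * B)ᵀ) -
      ((Qx + Aᵀ * Pt * A) -
        (Qxw + Aᵀ * Pt * B) * Gtp * (Qxw + Aᵀ * Pt * B)ᵀ)).PosSemidef :=
  riccati_step_monotone_general A B P Pt Qx Qxw Qw V C Cp Gp Gtp hQ hPt hC hCp hdiff hGp hGtp
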